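/- In QHC, ⊢ ¬α ↔ !¬?α: intuitionistic negation is definable via classical negation, i.e., the problem ¬α is equivalent to the problem 'prove that α has no solution'. -/

import Mathlib

/- Problem (intuitionistic) formulas and proposition (classical) formulas of QHC. -/
mutual
inductive PF : Type
  | var : Nat → PF
  | bot : PF
  | and : PF → PF → PF
  | or : PF → PF → PF
  | imp : PF → PF → PF
  | bang : CF → PF
inductive CF : Type
  | var : Nat → CF
  | fls : CF
  | and : CF → CF → CF
  | or : CF → CF → CF
  | imp : CF → CF → CF
  | quest : PF → CF
end

def PF.neg (α : PF) : PF := α.imp PF.bot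
def CF.neg (p : CF) : CF := p.imp CF.fls
def PF.iff (α β : PF) : PF := (α.imp β).and (β.imp α)
def CF.iff (p q : CF) : CF := (p.imp q).and (q.imp p)
def CF.box (p : CF) : CF := CF.quest (PF.bang p)
def PF.nabla (α : PF) : PF := PF.bang (CF.quest α)

/- Derivability in QHC, parameterized by a set `Ax` of extra problem axioms
(used to treat the axiom ¬!0 and its variants uniformly). Intuitionistic logic
on problems, classical logic on propositions, the rules α ⊢ ?α and p ⊢ !p, and
the mixed axioms ?!p → p, α → !?α, !(p→q) → (!p → !q), ?(α→β) → (?α → ?β). -/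
mutual
inductive ProvP (Ax : PF → Prop) : PF → Prop
  | axm {α} : Ax α → ProvP Ax α
  | mp {α β} : ProvP Ax (α.imp β) → ProvP Ax α → ProvP Ax β
  | ak (α β : PF) : ProvP Ax (α.imp (β.imp α))
  | as (α β γ : PF) : ProvP Ax ((α.imp (β.imp γ)).imp ((α.imp β).imp (α.imp γ)))
  | andI (α β : PF) : ProvP Ax (α.imp (β.imp (α.and β)))
  | andE1 (α β : PF) : ProvP Ax ((α.and β).imp α)
  | andE2 (α β : PF) : ProvP Ax ((α.and β).imp β)
  | orI1 (α β : PF) : ProvP Ax (α.imp (α.or β))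
  | orI2 (α β : PF) : ProvP Ax (β.imp (α.or β))
  | orE (α β γ : PF) : ProvP Ax ((α.imp γ).imp ((β.imp γ).imp ((α.or β).imp γ)))
  | exf (α : PF) : ProvP Ax (PF.bot.imp α)
  | bangIntro {p} : ProvC Ax p → ProvP Ax (PF.bang p)
  | bangImp (p q : CF) : ProvP Ax ((PF.bang (p.imp q)).imp ((PF.bang p).imp (PF.bang q)))
  | bangQuest (α : PF) : ProvP Ax (α.imp (PF.bang (CF.quest α)))
inductive ProvC (Ax : PF → Prop) : CF → Prop
  | mp {p q} : ProvC Ax (p.imp q) → ProvC Ax p → ProvC Ax q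
  | ak (p q : CF) : ProvC Ax (p.imp (q.imp p))
  | as (p q r : CF) : ProvC Ax ((p.imp (q.imp r)).imp ((p.imp q).imp (p.imp r)))
  | andI (p q : CF) : ProvC Ax (p.imp (q.imp (p.and q)))
  | andE1 (p q : CF) : ProvC Ax ((p.and q).imp p)
  | andE2 (p q : CF) : ProvC Ax ((p.and q).imp q)
  | orI1 (p q : CF) : ProvC Ax (p.imp (p.or q))
  | orI2 (p q : CF) : ProvC Ax (q.imp (p.or q))
  | orE (p q r : CF) : ProvC Ax ((p.imp r).imp ((q.imp r).imp ((p.or q).imp r)))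
  | exf (p : CF) : ProvC Ax (CF.fls.imp p)
  | lem (p : CF) : ProvC Ax (p.or (p.imp CF.fls))
  | questIntro {α} : ProvP Ax α → ProvC Ax (CF.quest α)
  | questImp (α β : PF) : ProvC Ax ((CF.quest (α.imp β)).imp ((CF.quest α).imp (CF.quest β)))
  | questBang (p : CF) : ProvC Ax ((CF.quest (PF.bang p)).imp p)
end

/-- The axiom (!⊥): ¬!0. -/
def QHCAx : PF → Prop := fun α => α = (PF.bang CF.fls).imp PF.bot

/-- Derivability of a problem in QHC. -/
def PrvP (α : PF) : Prop := ProvP QHCAx α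
/-- Derivability of a proposition in QHC. -/
def PrvC (p : CF) : Prop := ProvC QHCAx p

/-! Forward: α → !?α turns a solution of ¬α into one of !?¬α. On the classical side ?¬α gives
?α → ?⊥, and ?⊥ gives ?!0 (from ⊥ → !0), hence 0 by ?!p → p; so ⊢ ?¬α → ¬?α, which ! transports
to !?¬α → !¬?α. Backward: a solution of α gives !?α, which with !¬?α gives !0, refuted by ¬!0. -/

namespace ProvP

variable {Ax : PF → Prop}

theorem imp_postcomp {α β γ : PF} (h : ProvP Ax (β.imp γ)) :
    ProvP Ax ((α.imp β).imp (α.imp γ)) :=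
  mp (as α β γ) (mp (ak _ α) h)

theorem imp_trans {α β γ : PF} (hαβ : ProvP Ax (α.imp β)) (hβγ : ProvP Ax (β.imp γ)) :
    ProvP Ax (α.imp γ) :=
  mp (imp_postcomp hβγ) hαβ

theorem imp_precomp {α β γ : PF} (h : ProvP Ax (α.imp β)) :
    ProvP Ax ((β.imp γ).imp (α.imp γ)) :=
  mp (mp (as _ _ _) (imp_trans (ak (β.imp γ) α) (as α β γ))) (mp (ak _ _) h)

theorem iff_intro {α β : PF} (h₁ : ProvP Ax (α.imp β)) (h₂ : ProvP Ax (β.imp α)) :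
    ProvP Ax (α.iff β) :=
  mp (mp (andI _ _) h₁) h₂

theorem bang_mono {p q : CF} (h : ProvC Ax (p.imp q)) : ProvP Ax ((PF.bang p).imp (PF.bang q)) :=
  mp (bangImp p q) (bangIntro h)

end ProvP

namespace ProvC

variable {Ax : PF → Prop}

theorem imp_postcomp {p q r : CF} (h : ProvC Ax (q.imp r)) :
    ProvC Ax ((p.imp q).imp (p.imp r)) :=
  mp (as p q r) (mp (ak _ p) h)

theorem imp_trans {p q r : CF} (hpq : ProvC Ax (p.imp q)) (hqr : ProvC Ax (q.imp r)) :
    ProvC Ax (p.imp r) :=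
  mp (imp_postcomp hqr) hpq

theorem quest_mono {α β : PF} (h : ProvP Ax (α.imp β)) :
    ProvC Ax ((CF.quest α).imp (CF.quest β)) :=
  mp (questImp α β) (questIntro h)

theorem quest_bot_imp_fls : ProvC Ax ((CF.quest PF.bot).imp CF.fls) :=
  imp_trans (quest_mono (ProvP.exf (PF.bang CF.fls))) (questBang CF.fls)

theorem quest_neg_imp_neg_quest (α : PF) : ProvC Ax ((CF.quest α.neg).imp (CF.quest α).neg) :=
  imp_trans (questImp α PF.bot) (imp_postcomp quest_bot_imp_fls)

end ProvC

namespace ProvP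

variable {Ax : PF → Prop}

theorem neg_imp_bang_neg_quest (α : PF) : ProvP Ax (α.neg.imp (PF.bang (CF.quest α).neg)) :=
  imp_trans (bangQuest α.neg) (bang_mono (ProvC.quest_neg_imp_neg_quest α))

theorem bang_neg_imp_neg_bang (hbot : ProvP Ax (PF.bang CF.fls).neg) (p : CF) :
    ProvP Ax ((PF.bang p.neg).imp (PF.bang p).neg) :=
  imp_trans (bangImp p CF.fls) (imp_postcomp hbot)

theorem bang_neg_quest_imp_neg (hbot : ProvP Ax (PF.bang CF.fls).neg) (α : PF) :
    ProvP Ax ((PF.bang (CF.quest α).neg).imp α.neg) :=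
  imp_trans (bang_neg_imp_neg_bang hbot _) (imp_precomp (bangQuest α))

theorem neg_iff_bang_neg_quest (hbot : ProvP Ax (PF.bang CF.fls).neg) (α : PF) :
    ProvP Ax (α.neg.iff (PF.bang (CF.quest α).neg)) :=
  iff_intro (neg_imp_bang_neg_quest α) (bang_neg_quest_imp_neg hbot α)

end ProvP

theorem qhc_intuitionistic_negation (α : PF) :
    PrvP (PF.iff (PF.neg α) (PF.bang (CF.neg (CF.quest α)))) :=
  ProvP.neg_iff_bang_neg_quest (Ax := QHCAx) (ProvP.axm rfl) α
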